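/- arXiv:2005.03951 — 7 statements merged into one kernel-verified Lean document; each statement's English description precedes it below -/
import Mathlib

section
/- Let f, g : ℝ → ℝ be continuously differentiable and let (q,p,s) : ℝ → ℝ³ be a differentiable curve satisfying q̇ = s, ṡ = −f(q)s − g(q), ṗ = −p² − f(q)p − f′(q)s − g′(q). Then the function H(t) := p(t)s(t) + f(q(t))s(t) + g(q(t)) satisfies the differential equation Ḣ(t) = −(p(t) + f(q(t)))·H(t) for all t. Consequently, if the initial condition satisfies p(0)s(0) + f(q(0))s(0) + g(q(0)) = 0, then p(t)s(t) + f(q(t))s(t) + g(q(t)) = 0 for all t; in particular ṡ(t) = p(t)·q̇(t) for all t, i.e. p(t) is the slope ds/dq of the orbit in the (q,s)-plane wherever s(t) ≠ 0. -/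
/-! Differentiating `H = p s + f(q) s + g(q)` along the flow, the `f'(q) s` and `g'(q)` terms
of `ṗ` cancel those of the chain rule and leave `Ḣ = -(p + f(q)) H`. This is a linear
equation, so `H(t) = exp(-∫₀ᵗ (p + f(q))) H(0)`: the level set `H = 0` is invariant, and on it
`ṡ = -f(q) s - g(q) = p s = p q̇`. -/

open intervalIntegral

theorem eq_exp_integral_mul_of_hasDerivAt_mul_self {a x : ℝ → ℝ} (ha : Continuous a)
    (hx : ∀ t, HasDerivAt x (a t * x t) t) (t₀ t : ℝ) :
    x t = Real.exp (∫ u in t₀..t, a u) * x t₀ := by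
  set A : ℝ → ℝ := fun t => ∫ u in t₀..t, a u
  have hA : ∀ t, HasDerivAt A (a t) t := fun t =>
    (ha.integral_hasStrictDerivAt t₀ t).hasDerivAt
  have hconst : ∀ t, HasDerivAt (fun t => Real.exp (-A t) * x t) 0 t := fun t => by
    refine (((hA t).neg.exp).mul (hx t)).congr_deriv ?_
    ring
  have h := is_const_of_deriv_eq_zero (fun t => (hconst t).differentiableAt)
    (fun t => (hconst t).deriv) t t₀
  simp only [A, integral_same, neg_zero, Real.exp_zero, one_mul] at h
  rw [← h, ← mul_assoc, ← Real.exp_add, add_neg_cancel, Real.exp_zero, one_mul]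

theorem hasDerivAt_lienard_contact_hamiltonian {f g q p s : ℝ → ℝ} {t : ℝ}
    (hf : DifferentiableAt ℝ f (q t)) (hg : DifferentiableAt ℝ g (q t))
    (hq : HasDerivAt q (s t) t) (hs : HasDerivAt s (-f (q t) * s t - g (q t)) t)
    (hp : HasDerivAt p
      (-p t ^ 2 - f (q t) * p t - deriv f (q t) * s t - deriv g (q t)) t) :
    HasDerivAt (fun t => p t * s t + f (q t) * s t + g (q t))
      (-(p t + f (q t)) * (p t * s t + f (q t) * s t + g (q t))) t := by
  have hfq := hf.hasDerivAt.comp t hq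
  have hgq := hg.hasDerivAt.comp t hq
  refine (((hp.mul hs).add (hfq.mul hs)).add hgq).congr_deriv ?_
  rw [Function.comp_apply]
  ring

/-- along solutions of the contact Hamiltonisation of a Liénard system,
the Hamiltonian H(t) = p s + f(q) s + g(q) satisfies Ḣ = −(p + f(q))·H; hence if H(0) = 0
then H ≡ 0, and in particular ṡ(t) = p(t)·q̇(t) for all t (p is the slope ds/dq). -/
theorem lienard_contact_hamiltonian_decay
    (f g : ℝ → ℝ) (hf : ContDiff ℝ 1 f) (hg : ContDiff ℝ 1 g)
    (q p s : ℝ → ℝ)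
    (hq : Differentiable ℝ q) (hp : Differentiable ℝ p) (hs : Differentiable ℝ s)
    (h1 : ∀ t : ℝ, deriv q t = s t)
    (h2 : ∀ t : ℝ, deriv s t = - f (q t) * s t - g (q t))
    (h3 : ∀ t : ℝ, deriv p t =
      - (p t) ^ 2 - f (q t) * p t - deriv f (q t) * s t - deriv g (q t))
    (H : ℝ → ℝ)
    (hH : ∀ t : ℝ, H t = p t * s t + f (q t) * s t + g (q t)) :
    (∀ t : ℝ, deriv H t = -(p t + f (q t)) * H t) ∧
    (H 0 = 0 →
      (∀ t : ℝ, H t = 0) ∧ (∀ t : ℝ, deriv s t = p t * deriv q t)) := by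
  have hfd : Differentiable ℝ f := hf.differentiable one_ne_zero
  have hH' : ∀ t, HasDerivAt H (-(p t + f (q t)) * H t) t := fun t => by
    rw [funext hH]
    exact hasDerivAt_lienard_contact_hamiltonian (hfd _) (hg.differentiable one_ne_zero _)
      (h1 t ▸ (hq t).hasDerivAt) (h2 t ▸ (hs t).hasDerivAt) (h3 t ▸ (hp t).hasDerivAt)
  refine ⟨fun t => (hH' t).deriv, fun h0 => ?_⟩
  have hrate : Continuous fun t => -(p t + f (q t)) :=
    (hp.continuous.add (hfd.continuous.comp hq.continuous)).neg
  have hH_zero : ∀ t, H t = 0 := fun t => by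
    rw [eq_exp_integral_mul_of_hasDerivAt_mul_self hrate hH' 0 t, h0, mul_zero]
  refine ⟨hH_zero, fun t => ?_⟩
  rw [h2 t, h1 t]
  linarith [hH_zero t, hH t]
end

section
/- Let f : ℝ → ℝ be differentiable and fix (q₀,p₀,s₀) ∈ ℝ³. The curve γ(t) = (q(t),p(t),s(t)) with q(t) = q₀, p(t) = e^{−t f(q₀)}(p₀ − f′(q₀)s₀ t), s(t) = e^{−t f(q₀)} s₀ satisfies, for all t ∈ ℝ, the differential equations q̇ = 0, ṗ = −(p f(q) + s f′(q)), ṡ = −s f(q). In other words, the exponential map in the splitting integrator is the exact time-t flow of the vector field X_A = −(p f(q) + s f′(q))∂/∂p − s f(q)∂/∂s arising from the Hamiltonian term A = f(q)s. -/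
open Real

lemma hasDerivAt_exp_neg_mul (a t : ℝ) :
    HasDerivAt (fun t => exp (-t * a)) (-a * exp (-t * a)) t := by
  have hlin : HasDerivAt (fun t : ℝ => -t * a) (-a) t := by
    simpa using (hasDerivAt_neg t).mul_const a
  simpa [mul_comm] using hlin.exp

lemma hasDerivAt_exp_neg_mul_mul_sub (a b c t : ℝ) :
    HasDerivAt (fun t => exp (-t * a) * (b - c * t))
      (-(exp (-t * a) * (b - c * t) * a + exp (-t * a) * c)) t := by
  have hlin : HasDerivAt (fun t : ℝ => b - c * t) (-c) t := by
    simpa using ((hasDerivAt_id t).const_mul c).const_sub b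
  exact ((hasDerivAt_exp_neg_mul a t).mul hlin).congr_deriv (by ring)

theorem lienard_splitting_flow_A_general
    (f : ℝ → ℝ)
    (q0 p0 s0 : ℝ)
    (q p s : ℝ → ℝ)
    (hq : ∀ t : ℝ, q t = q0)
    (hp : ∀ t : ℝ, p t = Real.exp (-t * f q0) * (p0 - deriv f q0 * s0 * t))
    (hs : ∀ t : ℝ, s t = Real.exp (-t * f q0) * s0) :
    ∀ t : ℝ,
      deriv q t = 0 ∧
      deriv p t = -(p t * f (q t) + s t * deriv f (q t)) ∧
      deriv s t = - s t * f (q t) := by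
  obtain rfl : q = fun _ => q0 := funext hq
  obtain rfl : p = fun t => exp (-t * f q0) * (p0 - deriv f q0 * s0 * t) := funext hp
  obtain rfl : s = fun t => exp (-t * f q0) * s0 := funext hs
  intro t
  refine ⟨deriv_const t q0, ?_, ?_⟩
  · rw [(hasDerivAt_exp_neg_mul_mul_sub (f q0) p0 (deriv f q0 * s0) t).deriv]
    ring
  · rw [((hasDerivAt_exp_neg_mul (f q0) t).mul_const s0).deriv]
    ring

/-- the curve q(t) = q₀, p(t) = e^{−t f(q₀)}(p₀ − f′(q₀)s₀ t),
s(t) = e^{−t f(q₀)} s₀ is the exact flow of the vector field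
X_A = −(p f(q) + s f′(q)) ∂/∂p − s f(q) ∂/∂s arising from the Hamiltonian term A = f(q)s. -/
theorem lienard_splitting_flow_A
    (f : ℝ → ℝ) (hf : Differentiable ℝ f)
    (q0 p0 s0 : ℝ)
    (q p s : ℝ → ℝ)
    (hq : ∀ t : ℝ, q t = q0)
    (hp : ∀ t : ℝ, p t = Real.exp (-t * f q0) * (p0 - deriv f q0 * s0 * t))
    (hs : ∀ t : ℝ, s t = Real.exp (-t * f q0) * s0) :
    ∀ t : ℝ,
      deriv q t = 0 ∧
      deriv p t = -(p t * f (q t) + s t * deriv f (q t)) ∧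
      deriv s t = - s t * f (q t) :=
  lienard_splitting_flow_A_general f q0 p0 s0 q p s hq hp hs
end

section
/- Fix τ > 0 and ε > 0, and define Φ_{τ,ε} : ℝ² → ℝ² by Φ_{τ,ε}(q,s) = (q′,s′), where u = q + (τ/2)s, s′ = e^{ετ(1−u²)}(s − (τ/2)u) − (τ/2)u, and q′ = q + (τ/2)s + (τ/2)s′. Then Φ_{τ,ε} is differentiable at the origin, and its Jacobian matrix J at (0,0) satisfies trace(J) = (2 − τ²)(e^{ετ} + 1)/2 and det(J) = e^{ετ}. In particular det(J) > 1, so at least one eigenvalue of J has absolute value greater than 1 and the fixed point (0,0) is unstable. -/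
/-!
Φ is the palindromic composition `C ∘ B ∘ A ∘ B ∘ C` of the two shears
`C (q, s) = (q + τ s / 2, s)`, `B (u, s) = (u, s - τ u / 2)` and the kick
`A (u, v) = (u, e^{ετ(1 - u²)} v)`. Since `v = 0` at the origin, the `u`-dependence of the
exponent does not enter the linearization of `A`, which is `diag (1, e^{ετ})`. The shears are
unimodular, so `det J = e^{ετ} > 1`, and as the two roots of `z² - tr J z + det J` multiply
to `det J`, one of them has modulus greater than one.
-/

open ContinuousLinearMap

lemma exists_one_lt_norm_root_of_one_lt_norm (b c : ℂ) (hc : 1 < ‖c‖) :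
    ∃ z : ℂ, 1 < ‖z‖ ∧ z ^ 2 - b * z + c = 0 := by
  obtain ⟨w, hw⟩ := IsAlgClosed.exists_pow_nat_eq (b ^ 2 - 4 * c) two_pos
  have hroot₁ : ((b + w) / 2) ^ 2 - b * ((b + w) / 2) + c = 0 := by linear_combination hw / 4
  have hroot₂ : ((b - w) / 2) ^ 2 - b * ((b - w) / 2) + c = 0 := by linear_combination hw / 4
  have hprod : (b + w) / 2 * ((b - w) / 2) = c := by linear_combination -hw / 4
  rcases lt_or_ge 1 ‖(b + w) / 2‖ with h₁ | h₁
  · exact ⟨_, h₁, hroot₁⟩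
  refine ⟨_, lt_of_not_ge fun h₂ => ?_, hroot₂⟩
  have := mul_le_one₀ h₁ (norm_nonneg _) h₂
  rw [← norm_mul, hprod] at this
  linarith

def shearFst (a : ℝ) : ℝ × ℝ →L[ℝ] ℝ × ℝ := (fst ℝ ℝ ℝ + a • snd ℝ ℝ ℝ).prod (snd ℝ ℝ ℝ)

def shearSnd (a : ℝ) : ℝ × ℝ →L[ℝ] ℝ × ℝ := (fst ℝ ℝ ℝ).prod (snd ℝ ℝ ℝ - a • fst ℝ ℝ ℝ)

def scaleSnd (c : ℝ) : ℝ × ℝ →L[ℝ] ℝ × ℝ := (fst ℝ ℝ ℝ).prod (c • snd ℝ ℝ ℝ)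

@[simp] lemma shearFst_apply (a : ℝ) (p : ℝ × ℝ) : shearFst a p = (p.1 + a * p.2, p.2) := rfl

@[simp] lemma shearSnd_apply (a : ℝ) (p : ℝ × ℝ) : shearSnd a p = (p.1, p.2 - a * p.1) := rfl

@[simp] lemma scaleSnd_apply (c : ℝ) (p : ℝ × ℝ) : scaleSnd c p = (p.1, c * p.2) := rfl

def kickSnd (f : ℝ → ℝ) (p : ℝ × ℝ) : ℝ × ℝ := (p.1, f p.1 * p.2)

lemma hasFDerivAt_kickSnd {f : ℝ → ℝ} {u : ℝ} (hf : DifferentiableAt ℝ f u) :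
    HasFDerivAt (kickSnd f) (scaleSnd (f u)) (u, 0) := by
  have hfu : HasFDerivAt (fun p : ℝ × ℝ => f p.1) (fderiv ℝ f u ∘L fst ℝ ℝ ℝ) (u, 0) :=
    hf.hasFDerivAt.comp (u, 0) (hasFDerivAt_fst (p := (u, (0 : ℝ))))
  have hkick := (hasFDerivAt_fst (p := (u, (0 : ℝ)))).prodMk
    (hfu.mul (hasFDerivAt_snd (p := (u, (0 : ℝ)))))
  simp only [zero_smul, add_zero] at hkick
  exact hkick

/-- the (q,s)-restriction Φ_{τ,ε} of the integrator S₂(τ)(CBABC) is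
differentiable at the origin, its Jacobian J there has trace (2 − τ²)(e^{ετ} + 1)/2 and
determinant e^{ετ}; in particular det J > 1 and at least one eigenvalue of J (i.e. a
root of its characteristic polynomial z² − tr(J) z + det(J)) has absolute value > 1. -/
theorem vdp_splitting_integrator_jacobian_origin
    (τ ε : ℝ) (hτ : τ > 0) (hε : ε > 0)
    (Φ : ℝ × ℝ → ℝ × ℝ)
    (hΦ : ∀ q s : ℝ, Φ (q, s) =
      (q + (τ / 2) * s + (τ / 2) *
          (Real.exp (ε * τ * (1 - (q + (τ / 2) * s) ^ 2)) *
              (s - (τ / 2) * (q + (τ / 2) * s)) - (τ / 2) * (q + (τ / 2) * s)),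
        Real.exp (ε * τ * (1 - (q + (τ / 2) * s) ^ 2)) *
            (s - (τ / 2) * (q + (τ / 2) * s)) - (τ / 2) * (q + (τ / 2) * s))) :
    ∃ L : ℝ × ℝ →L[ℝ] ℝ × ℝ, HasFDerivAt Φ L ((0 : ℝ), (0 : ℝ)) ∧
      (L (1, 0)).1 + (L (0, 1)).2 = (2 - τ ^ 2) * (Real.exp (ε * τ) + 1) / 2 ∧
      (L (1, 0)).1 * (L (0, 1)).2 - (L (0, 1)).1 * (L (1, 0)).2 = Real.exp (ε * τ) ∧
      (L (1, 0)).1 * (L (0, 1)).2 - (L (0, 1)).1 * (L (1, 0)).2 > 1 ∧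
      ∃ z : ℂ, ‖z‖ > 1 ∧
        z ^ 2 - (((L (1, 0)).1 + (L (0, 1)).2 : ℝ) : ℂ) * z
          + (((L (1, 0)).1 * (L (0, 1)).2 - (L (0, 1)).1 * (L (1, 0)).2 : ℝ) : ℂ) = 0 := by
  set a := τ / 2
  set kick := kickSnd fun u => Real.exp (ε * τ * (1 - u ^ 2))
  have hfactor : Φ = shearFst a ∘ shearSnd a ∘ kick ∘ shearSnd a ∘ shearFst a := by
    funext ⟨q, s⟩
    simp only [hΦ, Function.comp_apply, shearFst_apply, shearSnd_apply, kick, kickSnd]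
  have hkick :
      HasFDerivAt kick (scaleSnd (Real.exp (ε * τ))) (shearSnd a (shearFst a (0, 0))) := by
    rw [Prod.mk_zero_zero, map_zero, map_zero, ← Prod.mk_zero_zero]
    convert hasFDerivAt_kickSnd (f := fun u => Real.exp (ε * τ * (1 - u ^ 2))) (u := 0)
      (by fun_prop) using 2
    norm_num
  set J := shearFst a ∘L shearSnd a ∘L scaleSnd (Real.exp (ε * τ)) ∘L shearSnd a ∘L shearFst a
  have hJ : HasFDerivAt Φ J (0, 0) := by
    rw [hfactor]
    exact (shearFst a).hasFDerivAt.comp (0, 0) ((shearSnd a).hasFDerivAt.comp (0, 0)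
      (hkick.comp (0, 0) ((shearSnd a).hasFDerivAt.comp (0, 0) (shearFst a).hasFDerivAt)))
  have htrace : (J (1, 0)).1 + (J (0, 1)).2 = (2 - τ ^ 2) * (Real.exp (ε * τ) + 1) / 2 := by
    simp only [J, a, comp_apply, shearFst_apply, shearSnd_apply, scaleSnd_apply]
    ring
  have hdet : (J (1, 0)).1 * (J (0, 1)).2 - (J (0, 1)).1 * (J (1, 0)).2 = Real.exp (ε * τ) := by
    simp only [J, a, comp_apply, shearFst_apply, shearSnd_apply, scaleSnd_apply]
    ring
  have hexp : 1 < Real.exp (ε * τ) := Real.one_lt_exp_iff.mpr (by positivity)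
  refine ⟨J, hJ, htrace, hdet, hdet ▸ hexp, exists_one_lt_norm_root_of_one_lt_norm _ _ ?_⟩
  rwa [hdet, Complex.norm_real, Real.norm_of_nonneg (by positivity)]
end

section
/- Let τ > 0, let d > 1, and set α = (2 − τ²)(d + 1). If α ≥ 4√d (so that β := α² − 16d ≥ 0 and α > 0), then both real numbers λ₁ = (α + √β)/4 and λ₂ = (α − √β)/4 satisfy λ₁ > 1 and λ₂ > 1. -/
/-- for τ > 0, d > 1 and α = (2 − τ²)(d + 1) with α ≥ 4√d, both
λ₁ = (α + √(α² − 16d))/4 and λ₂ = (α − √(α² − 16d))/4 are greater than 1. -/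
theorem vdp_real_eigenvalues_greater_than_one
    (τ d : ℝ) (hτ : τ > 0) (hd : d > 1)
    (α : ℝ) (hα : α = (2 - τ ^ 2) * (d + 1))
    (h : α ≥ 4 * Real.sqrt d) :
    (α + Real.sqrt (α ^ 2 - 16 * d)) / 4 > 1 ∧
    (α - Real.sqrt (α ^ 2 - 16 * d)) / 4 > 1 := by
  have hd0 : (0:ℝ) ≤ d := by linarith
  have hs : Real.sqrt d ^ 2 = d := Real.sq_sqrt hd0
  have hsnn : 0 ≤ Real.sqrt d := Real.sqrt_nonneg d
  have hs1 : Real.sqrt d > 1 := by nlinarith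
  have hα4 : α > 4 := by nlinarith
  have hτ2 : τ ^ 2 > 0 := pow_pos hτ 2
  have hαlt : α < 2 * (d + 1) := by nlinarith
  have hβ : α ^ 2 - 16 * d ≥ 0 := by nlinarith
  have hsb : Real.sqrt (α ^ 2 - 16 * d) < α - 4 := by
    rw [Real.sqrt_lt' (by linarith)]
    nlinarith
  have hsbnn : 0 ≤ Real.sqrt (α ^ 2 - 16 * d) := Real.sqrt_nonneg _
  constructor <;> nlinarith
end

section
/- For all real numbers r, ε and τ, the average over θ ∈ [0, 2π] of the function ε r sin²θ (1 − r² cos²θ) + (τ²/12) · r · ( −3 sinθ cosθ − 4 r² ε² sin³θ cosθ (r² cos²θ − 1) + r² ε sin⁴θ + ε cos²θ (r² cos²θ − 1) + ε sin²θ (1 − 9 r² cos²θ) ) equals −(1/32) · r · ε · ( r²(τ² + 4) − 16 ). That is, (1/(2π)) ∫₀^{2π} [that integrand] dθ = −(1/32) r ε ( r²(τ²+4) − 16 ). -/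
open Real intervalIntegral

/-! Over a full period, the terms of odd degree in `cos θ` have the form `g (sin θ) * cos θ` and
integrate to zero by the substitution `u = sin θ`. After `cos² = 1 - sin²` the remaining terms form
a quadratic polynomial in `sin² θ`, whose integral follows from `∫ sin² = π` and
`∫ sin⁴ = 3π/4` over `[0, 2π]`. -/

theorem integral_comp_sin_mul_cos_eq_zero {a b : ℝ} (h : sin a = sin b) {g : ℝ → ℝ}
    (hg : Continuous g) : ∫ x in a..b, g (sin x) * cos x = 0 := by
  calc _ = ∫ u in sin a..sin b, g u :=
        integral_comp_mul_deriv (fun x _ => hasDerivAt_sin x) continuousOn_cos hg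
    _ = 0 := by rw [h, integral_same]

theorem integral_sin_sq_zero_two_pi : ∫ x in (0 : ℝ)..2 * π, sin x ^ 2 = π := by
  simp

theorem integral_sin_pow_four_zero_two_pi : ∫ x in (0 : ℝ)..2 * π, sin x ^ 4 = 3 * π / 4 := by
  rw [integral_sin_pow 2, integral_sin_sq_zero_two_pi]
  norm_num
  ring

theorem integral_quadratic_sin_sq_zero_two_pi (A B C : ℝ) :
    ∫ x in (0 : ℝ)..2 * π, A + B * sin x ^ 2 + C * sin x ^ 4
      = 2 * π * A + π * B + 3 * π * C / 4 := by
  have hpow (c : ℝ) (n : ℕ) :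
      IntervalIntegrable (fun x => c * sin x ^ n) MeasureTheory.volume 0 (2 * π) :=
    Continuous.intervalIntegrable (by fun_prop) _ _
  rw [integral_add (intervalIntegrable_const.add (hpow B 2)) (hpow C 4),
    integral_add intervalIntegrable_const (hpow B 2), integral_const, integral_const_mul,
    integral_const_mul, integral_sin_sq_zero_two_pi, integral_sin_pow_four_zero_two_pi]
  simp only [sub_zero, smul_eq_mul]
  ring

/-- the average over θ ∈ [0,2π] of the order-τ² modified radial velocity of
the S₂(τ)(CBABC) integrator for the van der Pol oscillator equals
−(1/32) r ε (r²(τ²+4) − 16). -/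
theorem vdp_modified_averaged_radial_equation
    (r ε τ : ℝ) :
    (1 / (2 * Real.pi)) *
        (∫ θ in (0 : ℝ)..(2 * Real.pi),
          ε * r * Real.sin θ ^ 2 * (1 - r ^ 2 * Real.cos θ ^ 2)
            + (τ ^ 2 / 12) * r *
              (-3 * Real.sin θ * Real.cos θ
                - 4 * r ^ 2 * ε ^ 2 * Real.sin θ ^ 3 * Real.cos θ *
                    (r ^ 2 * Real.cos θ ^ 2 - 1)
                + r ^ 2 * ε * Real.sin θ ^ 4
                + ε * Real.cos θ ^ 2 * (r ^ 2 * Real.cos θ ^ 2 - 1)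
                + ε * Real.sin θ ^ 2 * (1 - 9 * r ^ 2 * Real.cos θ ^ 2)))
      = -(1 / 32) * r * ε * (r ^ 2 * (τ ^ 2 + 4) - 16) := by
  set k := τ ^ 2 / 12 * r
  set g : ℝ → ℝ := fun u => k * (-3 * u - 4 * r ^ 2 * ε ^ 2 * u ^ 3 * (r ^ 2 * (1 - u ^ 2) - 1))
  calc _ = 1 / (2 * π) * ((∫ x in (0 : ℝ)..2 * π, k * ε * (r ^ 2 - 1)
              + (ε * r * (1 - r ^ 2) + k * ε * (2 - 11 * r ^ 2)) * sin x ^ 2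
              + (ε * r ^ 3 + 11 * k * ε * r ^ 2) * sin x ^ 4)
            + ∫ x in (0 : ℝ)..2 * π, g (sin x) * cos x) := by
        rw [← integral_add (Continuous.intervalIntegrable (by fun_prop) _ _)
          (Continuous.intervalIntegrable (by fun_prop) _ _)]
        congr 1
        refine integral_congr fun θ _ => ?_
        simp only [g, cos_sq']
        ring
    _ = -(1 / 32) * r * ε * (r ^ 2 * (τ ^ 2 + 4) - 16) := by
        rw [integral_quadratic_sin_sq_zero_two_pi,
          integral_comp_sin_mul_cos_eq_zero (by simp) (by fun_prop)]
        field_simp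
        ring
end

section
/- Let 0 ≤ τ ≤ 1. Then the unique positive real number r satisfying r²(τ² + 4) = 16 is r = 4/√(τ² + 4), and this radius satisfies the bound |4/√(τ² + 4) − (2 − τ²/4)| ≤ (3/64)τ⁴; i.e. the limit-cycle radius of the integrator is r = 2 − τ²/4 + O(τ⁴). -/
/-- for 0 ≤ τ ≤ 1, the unique positive real solution of r²(τ² + 4) = 16 is
r = 4/√(τ² + 4), and |4/√(τ² + 4) − (2 − τ²/4)| ≤ (3/64)τ⁴, i.e. the limit-cycle radius
of the integrator is r = 2 − τ²/4 + O(τ⁴). -/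
theorem vdp_integrator_limit_cycle_radius
    (τ : ℝ) (h0 : 0 ≤ τ) (h1 : τ ≤ 1) :
    (∀ r : ℝ, 0 < r →
      (r ^ 2 * (τ ^ 2 + 4) = 16 ↔ r = 4 / Real.sqrt (τ ^ 2 + 4))) ∧
    |4 / Real.sqrt (τ ^ 2 + 4) - (2 - τ ^ 2 / 4)| ≤ (3 / 64) * τ ^ 4 := by
  have hτ2 : τ ^ 2 ≤ 1 := by nlinarith
  have hpos : (0:ℝ) < τ ^ 2 + 4 := by positivity
  set s := Real.sqrt (τ ^ 2 + 4) with hsdef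
  have hs : 0 < s := Real.sqrt_pos.mpr hpos
  have hs2 : s ^ 2 = τ ^ 2 + 4 := Real.sq_sqrt hpos.le
  set t := (4:ℝ) / s with htdef
  have ht0 : 0 < t := by positivity
  have hts : t * s = 4 := div_mul_cancel₀ 4 hs.ne'
  have ht2 : t ^ 2 * (τ ^ 2 + 4) = 16 := by
    have : (t * s) ^ 2 = 16 := by rw [hts]; norm_num
    nlinarith [this]
  constructor
  · intro r hr
    constructor
    · intro h
      have hrs : (r * s - 4) * (r * s + 4) = 0 := by nlinarith
      have hrs4 : r * s = 4 := by
        rcases mul_eq_zero.mp hrs with h' | h'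
        · linarith
        · nlinarith [mul_pos hr hs]
      rw [eq_div_iff hs.ne']
      exact hrs4
    · intro h
      rw [h]
      exact ht2
  · have ha0 : (0:ℝ) < 2 - τ ^ 2 / 4 := by nlinarith
    have hb0 : (0:ℝ) < 2 - τ ^ 2 / 4 + 3 / 64 * τ ^ 4 := by nlinarith [sq_nonneg (τ ^ 2)]
    rw [abs_le]
    constructor
    · -- lower bound: 2 - τ²/4 - 3/64 τ⁴ ≤ t, in fact 2 - τ²/4 ≤ t
      have h46 : τ ^ 6 ≤ τ ^ 4 := by nlinarith [mul_nonneg (pow_nonneg h0 4) (sub_nonneg.mpr hτ2)]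
      have ha2 : (2 - τ ^ 2 / 4) ^ 2 * (τ ^ 2 + 4) ≤ 16 := by nlinarith [pow_nonneg h0 4]
      have hsq : (2 - τ ^ 2 / 4) ^ 2 ≤ t ^ 2 := by nlinarith
      have := le_of_pow_le_pow_left₀ two_ne_zero ht0.le hsq
      nlinarith [sq_nonneg (τ ^ 2)]
    · -- upper bound: t ≤ 2 - τ²/4 + 3/64 τ⁴
      have hb2 : 16 ≤ (2 - τ ^ 2 / 4 + 3 / 64 * τ ^ 4) ^ 2 * (τ ^ 2 + 4) := by nlinarith [sq_nonneg τ, sq_nonneg (τ ^ 2), sq_nonneg (τ ^ 3)]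
      have hsq : t ^ 2 ≤ (2 - τ ^ 2 / 4 + 3 / 64 * τ ^ 4) ^ 2 := by nlinarith
      have := le_of_pow_le_pow_left₀ two_ne_zero hb0.le hsq
      linarith
end

section
/- Define the coordinate Jacobi bracket of two differentiable functions f, g : ℝ³ → ℝ (in coordinates (q,p,s)) by {g,f} = (g·∂f/∂s − ∂g/∂s·f) + p(∂g/∂s·∂f/∂p − ∂g/∂p·∂f/∂s) + (∂g/∂q·∂f/∂p − ∂g/∂p·∂f/∂q). If f and g are affine in p, i.e. f(q,p,s) = a(q,s) + p·b(q,s) and g(q,p,s) = c(q,s) + p·d(q,s) for differentiable functions a,b,c,d : ℝ² → ℝ, then {g,f} is again affine in p: there exist functions u, v : ℝ² → ℝ such that {g,f}(q,p,s) = u(q,s) + p·v(q,s) for all (q,p,s) ∈ ℝ³. -/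
/-!
Substituting `f = a + p b` and `g = c + p d`, the partial derivatives in `q` and `s` are again
affine in `p`, while `∂f/∂p = b` and `∂g/∂p = d` do not depend on `p`. The bracket is therefore
at most quadratic in `p`, and its `p²`-coefficient `(d ∂ₛb - ∂ₛd b) + (∂ₛd b - d ∂ₛb)` vanishes.
-/

theorem deriv_add_const_mul {u v : ℝ → ℝ} {x : ℝ} (hu : DifferentiableAt ℝ u x)
    (hv : DifferentiableAt ℝ v x) (p : ℝ) :
    deriv (fun t => u t + p * v t) x = deriv u x + p * deriv v x := by
  rw [deriv_fun_add hu (hv.const_mul p), deriv_const_mul p hv]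

section AffineInP

variable {f : ℝ × ℝ × ℝ → ℝ} {a b : ℝ × ℝ → ℝ}

theorem deriv_fst_of_affine (hf : ∀ q p s : ℝ, f (q, p, s) = a (q, s) + p * b (q, s))
    {q p s : ℝ} (ha : DifferentiableAt ℝ (fun q' => a (q', s)) q)
    (hb : DifferentiableAt ℝ (fun q' => b (q', s)) q) :
    deriv (fun q' => f (q', p, s)) q =
      deriv (fun q' => a (q', s)) q + p * deriv (fun q' => b (q', s)) q := by
  simp_rw [hf]
  exact deriv_add_const_mul ha hb p

theorem deriv_snd_of_affine (hf : ∀ q p s : ℝ, f (q, p, s) = a (q, s) + p * b (q, s))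
    (q p s : ℝ) : deriv (fun p' => f (q, p', s)) p = b (q, s) := by
  simp_rw [hf]
  simp

theorem deriv_thd_of_affine (hf : ∀ q p s : ℝ, f (q, p, s) = a (q, s) + p * b (q, s))
    {q p s : ℝ} (ha : DifferentiableAt ℝ (fun s' => a (q, s')) s)
    (hb : DifferentiableAt ℝ (fun s' => b (q, s')) s) :
    deriv (fun s' => f (q, p, s')) s =
      deriv (fun s' => a (q, s')) s + p * deriv (fun s' => b (q, s')) s := by
  simp_rw [hf]
  exact deriv_add_const_mul ha hb p

end AffineInP

/-- the coordinate Jacobi bracket of two functions on ℝ³ that are affine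
in p is again affine in p. -/
theorem jacobi_bracket_affine_in_p
    (f g : ℝ × ℝ × ℝ → ℝ)
    (a b c d : ℝ × ℝ → ℝ)
    (ha : Differentiable ℝ a) (hb : Differentiable ℝ b)
    (hc : Differentiable ℝ c) (hd : Differentiable ℝ d)
    (hf : ∀ q p s : ℝ, f (q, p, s) = a (q, s) + p * b (q, s))
    (hg : ∀ q p s : ℝ, g (q, p, s) = c (q, s) + p * d (q, s))
    (br : ℝ × ℝ × ℝ → ℝ)
    (hbr : ∀ q p s : ℝ, br (q, p, s) =
      (g (q, p, s) * deriv (fun s' => f (q, p, s')) s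
          - deriv (fun s' => g (q, p, s')) s * f (q, p, s))
        + p * (deriv (fun s' => g (q, p, s')) s * deriv (fun p' => f (q, p', s)) p
          - deriv (fun p' => g (q, p', s)) p * deriv (fun s' => f (q, p, s')) s)
        + (deriv (fun q' => g (q', p, s)) q * deriv (fun p' => f (q, p', s)) p
          - deriv (fun p' => g (q, p', s)) p * deriv (fun q' => f (q', p, s)) q)) :
    ∃ u v : ℝ × ℝ → ℝ, ∀ q p s : ℝ, br (q, p, s) = u (q, s) + p * v (q, s) := by
  refine ⟨fun x => c x * deriv (fun s' => a (x.1, s')) x.2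
        - deriv (fun s' => c (x.1, s')) x.2 * a x
        + deriv (fun q' => c (q', x.2)) x.1 * b x
        - d x * deriv (fun q' => a (q', x.2)) x.1,
      fun x => c x * deriv (fun s' => b (x.1, s')) x.2
        - deriv (fun s' => d (x.1, s')) x.2 * a x
        + deriv (fun q' => d (q', x.2)) x.1 * b x
        - d x * deriv (fun q' => b (q', x.2)) x.1, fun q p s => ?_⟩
  rw [hbr, hf, hg, deriv_snd_of_affine hf, deriv_snd_of_affine hg,
    deriv_fst_of_affine hf (by fun_prop) (by fun_prop),
    deriv_fst_of_affine hg (by fun_prop) (by fun_prop),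
    deriv_thd_of_affine hf (by fun_prop) (by fun_prop),
    deriv_thd_of_affine hg (by fun_prop) (by fun_prop)]
  ring
end
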